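/- arXiv:1311.7455 — 2 statements merged into one kernel-verified Lean document; each statement's English description precedes it below -/
import Mathlib

section
/- Fix j and let c_j be the smallest eigenvalue of X_{-j}'Q_j X_{-j}/n. If γ > 1/c_j, then the profiled semi-penalized criterion b ↦ (1/(2n))‖Q_j(y − X_{-j} b)‖² + Σ_{k≠j} ρ(b_k;λ) is strictly convex on ℝ^{p−1}, and consequently it has at most one global minimizer. -/
open Matrix

/-- The MCP (minimax concave penalty): `ρ(t;λ) = λ ∫₀^{|t|} (1 − u/(γλ))₊ du`. -/
noncomputable def mcp (lam gam t : ℝ) : ℝ :=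
  lam * ∫ u in (0:ℝ)..|t|, max (1 - u / (gam * lam)) 0

/-!
The MCP is `1/γ`-weakly convex: `ρ(t) + t²/(2γ) = λ|t| + (|t| - γλ)₊²/(2γ)` is convex. Moving
`‖b‖²/(2γ)` from the penalty into the loss leaves the quadratic
`b ↦ ‖Q_j(y - X_{-j} b)‖²/(2n) - ‖b‖²/(2γ)`, whose curvature is at least `c_j - 1/γ > 0` since
`Q_j` is an orthogonal projection, so that `‖Q_j X_{-j} d‖² = d'X_{-j}'Q_j X_{-j} d`. A strongly
convex function plus a convex one is strictly convex, and has at most one minimizer.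
-/

open Set

lemma integral_max_one_sub_div_zero_of_le {a s : ℝ} (ha : 0 < a) (hs₀ : 0 ≤ s) (hsa : s ≤ a) :
    ∫ u in (0:ℝ)..s, max (1 - u / a) 0 = s - s ^ 2 / (2 * a) := by
  have hpos : EqOn (fun u => max (1 - u / a) 0) (fun u => 1 - u / a) (uIcc 0 s) := by
    intro u hu
    rw [uIcc_of_le hs₀] at hu
    exact max_eq_left (sub_nonneg.2 ((div_le_one ha).2 (hu.2.trans hsa)))
  rw [intervalIntegral.integral_congr hpos, intervalIntegral.integral_sub intervalIntegrable_const
    (intervalIntegral.intervalIntegrable_id.div_const a), intervalIntegral.integral_div,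
    integral_id, intervalIntegral.integral_const, smul_eq_mul]
  ring

lemma integral_max_one_sub_div_zero_of_ge {a s : ℝ} (ha : 0 < a) (has : a ≤ s) :
    ∫ u in (0:ℝ)..s, max (1 - u / a) 0 = a / 2 := by
  have hcont : Continuous fun u : ℝ => max (1 - u / a) 0 := by fun_prop
  have hzero : EqOn (fun u => max (1 - u / a) 0) (fun _ => 0) (uIcc a s) := by
    intro u hu
    rw [uIcc_of_le has] at hu
    exact max_eq_right (sub_nonpos.2 ((one_le_div ha).2 hu.1))
  rw [← intervalIntegral.integral_add_adjacent_intervals (hcont.intervalIntegrable 0 a)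
    (hcont.intervalIntegrable a s), integral_max_one_sub_div_zero_of_le ha ha.le le_rfl,
    intervalIntegral.integral_congr hzero, intervalIntegral.integral_zero]
  field_simp
  ring

lemma mcp_add_sq_div_eq {lam gam : ℝ} (hlam : 0 < lam) (hgam : 0 < gam) (t : ℝ) :
    mcp lam gam t + t ^ 2 / (2 * gam) = lam * |t| + max (|t| - gam * lam) 0 ^ 2 / (2 * gam) := by
  have ha : 0 < gam * lam := mul_pos hgam hlam
  rw [mcp, ← sq_abs t]
  rcases le_or_gt |t| (gam * lam) with h | h
  · rw [integral_max_one_sub_div_zero_of_le ha (abs_nonneg t) h, max_eq_right (sub_nonpos.2 h)]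
    field_simp
    ring
  · rw [integral_max_one_sub_div_zero_of_ge ha h.le, max_eq_left (sub_nonneg.2 h.le)]
    field_simp
    ring

lemma convexOn_mcp_add_sq_div {lam gam : ℝ} (hlam : 0 < lam) (hgam : 0 < gam) :
    ConvexOn ℝ univ fun t => mcp lam gam t + t ^ 2 / (2 * gam) := by
  simp_rw [mcp_add_sq_div_eq hlam hgam]
  have habs : ConvexOn ℝ univ fun t : ℝ => |t| := convexOn_norm convex_univ
  have hexcess : ConvexOn ℝ univ fun t : ℝ => max (|t| - gam * lam) 0 :=
    (habs.sub (concaveOn_const _ convex_univ)).sup (convexOn_const 0 convex_univ)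
  refine (habs.smul hlam.le).add ?_
  simp_rw [div_eq_inv_mul]
  exact (hexcess.pow (fun t _ => le_max_right _ _) 2).smul (by positivity)

lemma convexOn_univ_sum_comp_apply {ι E : Type*} [Fintype ι] [AddCommMonoid E] [Module ℝ E]
    {φ : E → ℝ} (hφ : ConvexOn ℝ univ φ) :
    ConvexOn ℝ univ fun b : ι → E => ∑ k, φ (b k) := by
  refine ⟨convex_univ, fun x _ y _ a b ha hb hab => ?_⟩
  simp only [Pi.add_apply, Pi.smul_apply, smul_eq_mul, Finset.mul_sum, ← Finset.sum_add_distrib]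
  exact Finset.sum_le_sum fun k _ => hφ.2 (mem_univ _) (mem_univ _) ha hb hab

section LeastSquares

variable {ι κ : Type*} [Fintype ι] [Fintype κ]

lemma transpose_mul_self_one_sub_inv_dotProduct_smul_vecMulVec {K : Type*} [Field K]
    [DecidableEq κ] (x : κ → K) :
    (1 - (x ⬝ᵥ x)⁻¹ • vecMulVec x x)ᵀ * (1 - (x ⬝ᵥ x)⁻¹ • vecMulVec x x)
      = 1 - (x ⬝ᵥ x)⁻¹ • vecMulVec x x := by
  rw [transpose_sub, transpose_one, transpose_smul, transpose_vecMulVec]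
  rcases eq_or_ne (x ⬝ᵥ x) 0 with hx | hx
  · simp [hx]
  have hsq : vecMulVec x x * vecMulVec x x = (x ⬝ᵥ x) • vecMulVec x x := by
    rw [vecMulVec_mul_vecMulVec, vecMulVec_smul]
  rw [sub_mul, mul_sub, mul_sub, smul_mul_smul_comm, hsq, smul_smul, mul_assoc,
    inv_mul_cancel₀ hx]
  simp

lemma dotProduct_mul_mulVec_self {R : Type*} [CommSemiring R] {P : Matrix κ κ R}
    (hP : Pᵀ * P = P) (A : Matrix κ ι R) (d : ι → R) :
    (P * A) *ᵥ d ⬝ᵥ (P * A) *ᵥ d = d ⬝ᵥ (Aᵀ * P * A) *ᵥ d := by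
  conv_lhs => arg 1; rw [← vecMul_transpose]
  rw [← dotProduct_mulVec, mulVec_mulVec, transpose_mul, Matrix.mul_assoc,
    ← Matrix.mul_assoc Pᵀ, hP, Matrix.mul_assoc]

lemma dotProduct_self_smul_add_smul {R : Type*} [CommRing R] (u v : ι → R) {a b : R}
    (hab : a + b = 1) :
    (a • u + b • v) ⬝ᵥ (a • u + b • v)
      = a * (u ⬝ᵥ u) + b * (v ⬝ᵥ v) - a * b * ((u - v) ⬝ᵥ (u - v)) := by
  obtain rfl : b = 1 - a := eq_sub_of_add_eq' hab
  simp only [add_dotProduct, dotProduct_add, sub_dotProduct, dotProduct_sub, smul_dotProduct,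
    dotProduct_smul, smul_eq_mul, dotProduct_comm v u]
  ring

lemma sq_norm_le_dotProduct_self (d : ι → ℝ) : ‖d‖ ^ 2 ≤ d ⬝ᵥ d := by
  have hd : ‖d‖ ≤ Real.sqrt (d ⬝ᵥ d) := by
    refine (pi_norm_le_iff_of_nonneg (Real.sqrt_nonneg _)).2 fun k => ?_
    rw [Real.norm_eq_abs]
    refine Real.abs_le_sqrt ?_
    simpa only [dotProduct, sq] using
      Finset.single_le_sum (fun i _ => mul_self_nonneg (d i)) (Finset.mem_univ k)
  calc ‖d‖ ^ 2 ≤ Real.sqrt (d ⬝ᵥ d) ^ 2 := by gcongr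
    _ = d ⬝ᵥ d := Real.sq_sqrt (Finset.sum_nonneg fun i _ => mul_self_nonneg (d i))

lemma strongConvexOn_sq_residual_sub_sq (M : Matrix κ ι ℝ) (z : κ → ℝ) {w μ c : ℝ}
    (hμc : μ ≤ c) (hM : ∀ d, c * (d ⬝ᵥ d) ≤ w * (M *ᵥ d ⬝ᵥ M *ᵥ d)) :
    StrongConvexOn univ (c - μ)
      fun b => w / 2 * ((z - M *ᵥ b) ⬝ᵥ (z - M *ᵥ b)) - μ / 2 * (b ⬝ᵥ b) := by
  refine ⟨convex_univ, fun x _ y _ a b ha hb hab => ?_⟩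
  have hres : z - M *ᵥ (a • x + b • y) = a • (z - M *ᵥ x) + b • (z - M *ᵥ y) := by
    have hz : z = a • z + b • z := by rw [← add_smul, hab, one_smul]
    rw [mulVec_add, mulVec_smul, mulVec_smul, smul_sub, smul_sub]
    conv_lhs => rw [hz]
    abel
  have hdiff : (z - M *ᵥ x) - (z - M *ᵥ y) = M *ᵥ (y - x) := by
    rw [mulVec_sub]; abel
  have hcurv := hM (y - x)
  -- the modulus is measured in the sup norm of `ι → ℝ`, dominated by the Euclidean one
  have hnorm := sq_norm_le_dotProduct_self (x - y)
  have hswap : (y - x) ⬝ᵥ (y - x) = (x - y) ⬝ᵥ (x - y) := by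
    rw [← neg_sub x y, neg_dotProduct_neg]
  simp only [smul_eq_mul]
  rw [hres, dotProduct_self_smul_add_smul _ _ hab, dotProduct_self_smul_add_smul _ _ hab, hdiff]
  have hgap : (c - μ) / 2 * ‖x - y‖ ^ 2
      ≤ w / 2 * (M *ᵥ (y - x) ⬝ᵥ M *ᵥ (y - x)) - μ / 2 * ((x - y) ⬝ᵥ (x - y)) := by
    rw [hswap] at hcurv
    nlinarith [mul_le_mul_of_nonneg_left hnorm (sub_nonneg.2 hμc)]
  nlinarith [mul_le_mul_of_nonneg_left hgap (mul_nonneg ha hb)]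

end LeastSquares

theorem stmt_15_general {n p : ℕ} (X : Matrix (Fin n) (Fin p) ℝ) (y : Fin n → ℝ)
    (lam gam : ℝ) (hlam : 0 < lam)
    (j : Fin p)
    -- `Q_j = I − x_j(x_j'x_j)⁻¹x_j'`
    (Q : Matrix (Fin n) (Fin n) ℝ)
    (hQ : Q = 1 - ((fun i => X i j) ⬝ᵥ (fun i => X i j))⁻¹ •
        vecMulVec (fun i => X i j) (fun i => X i j))
    -- `X_{-j}`
    (Xmj : Matrix (Fin n) {k : Fin p // k ≠ j} ℝ)
    (hXmj : Xmj = X.submatrix id (Subtype.val : {k : Fin p // k ≠ j} → Fin p))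
    -- `c_j` is the smallest eigenvalue of `X_{-j}'Q_jX_{-j}/n`
    (cj : ℝ) (hcjpos : 0 < cj)
    (hcj_le : ∀ u : {k : Fin p // k ≠ j} → ℝ,
      cj * (u ⬝ᵥ u) ≤ u ⬝ᵥ ((n : ℝ)⁻¹ • (Xmjᵀ * Q * Xmj)).mulVec u)
    -- `γ > 1/c_j`
    (hconv : gam > 1 / cj)
    -- the profiled criterion `G`
    (G : ({k : Fin p // k ≠ j} → ℝ) → ℝ)
    (hG : ∀ b, G b = (1 / (2 * n)) *
        ∑ i, (Q.mulVec (fun i' => y i' - ∑ k : {k : Fin p // k ≠ j}, X i' k.val * b k) i) ^ 2 +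
        ∑ k : {k : Fin p // k ≠ j}, mcp lam gam (b k)) :
    StrictConvexOn ℝ Set.univ G ∧
    ∀ b₁ b₂ : {k : Fin p // k ≠ j} → ℝ,
      (∀ b, G b₁ ≤ G b) → (∀ b, G b₂ ≤ G b) → b₁ = b₂ := by
  have hgam : 0 < gam := (one_div_pos.2 hcjpos).trans hconv
  have hgam_inv : gam⁻¹ < cj := inv_lt_of_inv_lt₀ hcjpos (by rwa [← one_div])
  have hcurv : ∀ d, cj * (d ⬝ᵥ d) ≤ (n : ℝ)⁻¹ * ((Q * Xmj) *ᵥ d ⬝ᵥ (Q * Xmj) *ᵥ d) := by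
    have hQ_proj : Qᵀ * Q = Q := hQ ▸ transpose_mul_self_one_sub_inv_dotProduct_smul_vecMulVec _
    simpa only [dotProduct_mul_mulVec_self hQ_proj, smul_mulVec, dotProduct_smul,
      smul_eq_mul] using hcj_le
  have hloss := strongConvexOn_sq_residual_sub_sq (Q * Xmj) (Q *ᵥ y) hgam_inv.le hcurv
  have hpen := convexOn_univ_sum_comp_apply (ι := {k : Fin p // k ≠ j})
    (convexOn_mcp_add_sq_div hlam hgam)
  have hsplit : G =
      (fun b => (n : ℝ)⁻¹ / 2 * ((Q *ᵥ y - (Q * Xmj) *ᵥ b) ⬝ᵥ (Q *ᵥ y - (Q * Xmj) *ᵥ b))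
        - gam⁻¹ / 2 * (b ⬝ᵥ b)) +
      fun b => ∑ k, (mcp lam gam (b k) + b k ^ 2 / (2 * gam)) := by
    funext b
    have hres : (fun i' => y i' - ∑ k : {k : Fin p // k ≠ j}, X i' k.val * b k)
        = y - Xmj *ᵥ b := by
      subst hXmj; rfl
    rw [hG, hres, mulVec_sub, mulVec_mulVec]
    simp only [Pi.add_apply, dotProduct, Finset.sum_add_distrib, ← Finset.sum_div, sq]
    ring
  have hG_strict : StrictConvexOn ℝ univ G := by
    rw [hsplit]
    refine (hloss.add (uniformConvexOn_zero.2 hpen)).strictConvexOn fun r hr => ?_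
    have : 0 < cj - gam⁻¹ := sub_pos.2 hgam_inv
    simp only [Pi.add_apply, Pi.zero_apply, add_zero]
    positivity
  exact ⟨hG_strict, fun b₁ b₂ h₁ h₂ => hG_strict.eq_of_isMinOn (isMinOn_univ_iff.2 h₁)
    (isMinOn_univ_iff.2 h₂) trivial trivial⟩

/-- if `γ > 1/c_j`, where `c_j > 0` is the smallest eigenvalue of
`X_{-j}'Q_jX_{-j}/n` (characterized variationally), then the profiled
semi-penalized criterion `b ↦ (1/(2n))‖Q_j(y − X_{-j}b)‖² + Σ_{k≠j}ρ(b_k;λ)` is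
strictly convex on `ℝ^{p−1}`, and hence has at most one global minimizer. -/
theorem stmt_15 {n p : ℕ} (X : Matrix (Fin n) (Fin p) ℝ) (y : Fin n → ℝ)
    (lam gam : ℝ) (hlam : 0 < lam) (hgam : 0 < gam)
    (j : Fin p)
    -- `Q_j = I − x_j(x_j'x_j)⁻¹x_j'`
    (Q : Matrix (Fin n) (Fin n) ℝ)
    (hQ : Q = 1 - ((fun i => X i j) ⬝ᵥ (fun i => X i j))⁻¹ •
        vecMulVec (fun i => X i j) (fun i => X i j))
    -- `X_{-j}`
    (Xmj : Matrix (Fin n) {k : Fin p // k ≠ j} ℝ)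
    (hXmj : Xmj = X.submatrix id (Subtype.val : {k : Fin p // k ≠ j} → Fin p))
    -- `c_j` is the smallest eigenvalue of `X_{-j}'Q_jX_{-j}/n`
    (cj : ℝ) (hcjpos : 0 < cj)
    (hcj_le : ∀ u : {k : Fin p // k ≠ j} → ℝ,
      cj * (u ⬝ᵥ u) ≤ u ⬝ᵥ ((n : ℝ)⁻¹ • (Xmjᵀ * Q * Xmj)).mulVec u)
    (hcj_attained : ∃ u : {k : Fin p // k ≠ j} → ℝ, u ≠ 0 ∧
      u ⬝ᵥ ((n : ℝ)⁻¹ • (Xmjᵀ * Q * Xmj)).mulVec u = cj * (u ⬝ᵥ u))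
    -- `γ > 1/c_j`
    (hconv : gam > 1 / cj)
    -- the profiled criterion `G`
    (G : ({k : Fin p // k ≠ j} → ℝ) → ℝ)
    (hG : ∀ b, G b = (1 / (2 * n)) *
        ∑ i, (Q.mulVec (fun i' => y i' - ∑ k : {k : Fin p // k ≠ j}, X i' k.val * b k) i) ^ 2 +
        ∑ k : {k : Fin p // k ≠ j}, mcp lam gam (b k)) :
    StrictConvexOn ℝ Set.univ G ∧
    ∀ b₁ b₂ : {k : Fin p // k ≠ j} → ℝ,
      (∀ b, G b₁ ≤ G b) → (∀ b, G b₂ ≤ G b) → b₁ = b₂ :=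
  stmt_15_general X y lam gam hlam j Q hQ Xmj hXmj cj hcjpos hcj_le hconv G hG
end

section
/- Fix j and suppose γ > 1/c_j, where c_j is the smallest eigenvalue of X_{-j}'Q_j X_{-j}/n (so the profiled criterion G(b) = (1/(2n))‖Q_j(y − X_{-j} b)‖² + Σ_{k≠j} ρ(b_k;λ) is strictly convex). Let b* ∈ ℝ^{p−1} be supported on S_j (i.e., b*_k = 0 for k ∉ S_j) and satisfy: (i) x_k'Q_j(y − X_{-j} b*) = 0 for every k ∈ S_j; (ii) |b*_k| ≥ γλ for every k ∈ S_j; and (iii) max_{k ∉ S_j} |x_k'Q_j(y − X_{-j} b*)|/n < λ. Then b* is the unique global minimizer of G. -/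
/-!
Write `δ = b - b*` and `g = X_{-j}'Q_j(y - X_{-j}b*)/n`. Since `Q_j` is a symmetric idempotent,
the least-squares part of `G` increases by exactly `-g·δ + δ'(X_{-j}'Q_jX_{-j}/n)δ/2`, and the
quadratic term is at least `c_j‖δ‖²/2`. Conditions (i)–(iii) make `g` a subgradient of the penalty
at `b*` up to curvature `1/γ`: `ρ(b_k) ≥ ρ(b*_k) + g_kδ_k - δ_k²/(2γ)`, because on `S_j` we have
`g_k = 0` and `ρ` is already at its maximum `γλ²/2` at `b*_k`, while off `S_j` we have `|g_k| ≤ λ`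
and `ρ(t) ≥ λ|t| - t²/(2γ)`. Summing, `G(b) - G(b*) ≥ (c_j - 1/γ)‖δ‖²/2 > 0`.
-/

open Matrix

section Projection

variable {R ι κ : Type*} [Fintype ι] [Fintype κ]

theorem dotProduct_mulVec_sub_mulVec_self [CommRing R] {P : Matrix ι ι R} (hP : Pᵀ * P = P)
    (r : ι → R) (A : Matrix ι κ R) (δ : κ → R) :
    (P *ᵥ (r - A *ᵥ δ)) ⬝ᵥ (P *ᵥ (r - A *ᵥ δ)) =
      (P *ᵥ r) ⬝ᵥ (P *ᵥ r) - 2 * δ ⬝ᵥ (Aᵀ *ᵥ (P *ᵥ r)) + δ ⬝ᵥ ((Aᵀ * P * A) *ᵥ δ) := by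
  have hPP : ∀ u w, (P *ᵥ u) ⬝ᵥ (P *ᵥ w) = u ⬝ᵥ (P *ᵥ w) := fun u w => by
    rw [← vecMul_transpose, ← dotProduct_mulVec, mulVec_mulVec, hP]
  have hsymm : ∀ u w, u ⬝ᵥ (P *ᵥ w) = w ⬝ᵥ (P *ᵥ u) := fun u w => by
    rw [← hPP u w, ← hPP w u, dotProduct_comm]
  have hA : ∀ u, (A *ᵥ δ) ⬝ᵥ u = δ ⬝ᵥ (Aᵀ *ᵥ u) := fun u => by
    rw [dotProduct_comm, dotProduct_mulVec, ← mulVec_transpose, dotProduct_comm]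
  rw [hPP, hPP r r, mulVec_sub, dotProduct_sub, sub_dotProduct, sub_dotProduct,
    hsymm r (A *ᵥ δ), hA, hA, ← mulVec_mulVec, ← mulVec_mulVec]
  ring

variable [DecidableEq ι] [Field R] [LinearOrder R] [IsStrictOrderedRing R]

noncomputable def projOrthCompl (v : ι → R) : Matrix ι ι R :=
  1 - (v ⬝ᵥ v)⁻¹ • vecMulVec v v

theorem projOrthCompl_transpose_mul_self (v : ι → R) :
    (projOrthCompl v)ᵀ * projOrthCompl v = projOrthCompl v := by
  have hT : (projOrthCompl v)ᵀ = projOrthCompl v := by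
    simp [projOrthCompl]
  rw [hT]
  rcases eq_or_ne v 0 with rfl | hv
  · simp [projOrthCompl]
  have hvv : v ⬝ᵥ v ≠ 0 := mt dotProduct_self_eq_zero.mp hv
  have hc : (v ⬝ᵥ v)⁻¹ * (v ⬝ᵥ v)⁻¹ * (v ⬝ᵥ v) = (v ⬝ᵥ v)⁻¹ := by field_simp
  simp only [projOrthCompl, sub_mul, mul_sub, one_mul, mul_one, smul_mul_smul_comm,
    vecMulVec_mul_vecMulVec, vecMulVec_smul, smul_smul, hc, sub_self, sub_zero]

end Projection

theorem hasDerivAt_max_zero_sq (x : ℝ) :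
    HasDerivAt (fun x : ℝ => max x 0 ^ 2) (2 * max x 0) x := by
  rcases lt_trichotomy x 0 with hx | rfl | hx
  · have he : (fun x : ℝ => max x 0 ^ 2) =ᶠ[nhds x] fun _ => 0 := by
      filter_upwards [eventually_lt_nhds hx] with z hz
      simp [max_eq_right hz.le]
    simpa [max_eq_right hx.le] using (hasDerivAt_const x (0:ℝ)).congr_of_eventuallyEq he
  · rw [hasDerivAt_iff_isLittleO, Asymptotics.isLittleO_iff]
    intro c hc
    filter_upwards [Metric.ball_mem_nhds (0:ℝ) hc] with z hz
    rw [Metric.mem_ball, Real.dist_eq, sub_zero] at hz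
    have h1 : max z 0 ≤ |z| := max_le (le_abs_self z) (abs_nonneg z)
    have h2 : (0:ℝ) ≤ max z 0 := le_max_right _ _
    have hz2 : max z 0 ^ 2 ≤ c * |z| := by nlinarith [abs_nonneg z]
    simpa [Real.norm_eq_abs, abs_of_nonneg (sq_nonneg (max z (0:ℝ)))] using hz2
  · have he : (fun x : ℝ => max x 0 ^ 2) =ᶠ[nhds x] fun z => z ^ 2 := by
      filter_upwards [eventually_gt_nhds hx] with z hz
      simp [max_eq_left hz.le]
    simpa [max_eq_left hx.le] using (hasDerivAt_pow 2 x).congr_of_eventuallyEq he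

section MCP

variable {lam gam : ℝ} (hlam : 0 < lam) (hgam : 0 < gam)
include hlam hgam

theorem mcp_eq (t : ℝ) :
    mcp lam gam t = gam * lam ^ 2 / 2 - max (gam * lam - |t|) 0 ^ 2 / (2 * gam) := by
  have hc : 0 < gam * lam := mul_pos hgam hlam
  set c := gam * lam with hcdef
  have hF : ∀ u : ℝ, HasDerivAt (fun u : ℝ => c / 2 - max (c - u) 0 ^ 2 / (2 * c))
      (max (1 - u / c) 0) u := by
    intro u
    have h := (((hasDerivAt_max_zero_sq (c - u)).comp u ((hasDerivAt_id u).const_sub c)).div_const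
      (2 * c)).const_sub (c / 2)
    refine h.congr_deriv ?_
    have hmax : max ((c - u) / c) 0 = max (c - u) 0 / c := by
      rw [← max_div_div_right hc.le, zero_div]
    rw [show 1 - u / c = (c - u) / c by field_simp, hmax]
    field_simp
  have hint : IntervalIntegrable (fun u => max (1 - u / c) 0) MeasureTheory.volume 0 |t| :=
    (by fun_prop : Continuous fun u => max (1 - u / c) 0).intervalIntegrable _ _
  rw [mcp, intervalIntegral.integral_eq_sub_of_hasDerivAt (fun u _ => hF u) hint, sub_zero,
    max_eq_left hc.le, hcdef]
  field_simp
  ring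

theorem mcp_of_le_abs {s : ℝ} (hs : gam * lam ≤ |s|) : mcp lam gam s = gam * lam ^ 2 / 2 := by
  rw [mcp_eq hlam hgam, max_eq_right (by linarith)]
  ring

theorem mcp_sub_sq_le_of_le_abs {s : ℝ} (hs : gam * lam ≤ |s|) (b : ℝ) :
    mcp lam gam s - (b - s) ^ 2 / (2 * gam) ≤ mcp lam gam b := by
  rw [mcp_of_le_abs hlam hgam hs, mcp_eq hlam hgam]
  have hM : max (gam * lam - |b|) 0 ≤ |b - s| := by
    refine max_le ?_ (abs_nonneg _)
    linarith [abs_sub_abs_le_abs_sub s b, abs_sub_comm s b]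
  have hsq : max (gam * lam - |b|) 0 ^ 2 ≤ (b - s) ^ 2 := by
    rw [← sq_abs (b - s)]
    exact pow_le_pow_left₀ (le_max_right _ _) hM 2
  have := div_le_div_of_nonneg_right hsq (by positivity : (0:ℝ) ≤ 2 * gam)
  linarith

theorem mul_sub_sq_le_mcp {g : ℝ} (hg : |g| ≤ lam) (b : ℝ) :
    g * b - b ^ 2 / (2 * gam) ≤ mcp lam gam b := by
  rw [mcp_eq hlam hgam]
  have hgb : g * b ≤ lam * |b| :=
    (le_abs_self _).trans (by rw [abs_mul]; exact mul_le_mul_of_nonneg_right hg (abs_nonneg b))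
  have hsq : max (gam * lam - |b|) 0 ^ 2 ≤ (gam * lam - |b|) ^ 2 := by
    rcases max_choice (gam * lam - |b|) 0 with h | h
    · rw [h]
    · rw [h, zero_pow two_ne_zero]
      exact sq_nonneg _
  have hexpand : gam * lam ^ 2 / 2 - (gam * lam - |b|) ^ 2 / (2 * gam) =
      lam * |b| - b ^ 2 / (2 * gam) := by
    field_simp
    rw [← sq_abs b]
    ring
  have := div_le_div_of_nonneg_right hsq (by positivity : (0:ℝ) ≤ 2 * gam)
  linarith

theorem sum_mcp_add_dotProduct_sub_le {ι : Type*} [Fintype ι] (S : Set ι) {s g : ι → ℝ}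
    (hs_large : ∀ k ∈ S, gam * lam ≤ |s k|) (hs_zero : ∀ k ∉ S, s k = 0)
    (hg_zero : ∀ k ∈ S, g k = 0) (hg_le : ∀ k ∉ S, |g k| ≤ lam) (b : ι → ℝ) :
    ∑ k, mcp lam gam (s k) + g ⬝ᵥ (b - s) - (b - s) ⬝ᵥ (b - s) / (2 * gam) ≤
      ∑ k, mcp lam gam (b k) := by
  have hk : ∀ k, mcp lam gam (s k) + g k * (b k - s k) - (b k - s k) ^ 2 / (2 * gam) ≤
      mcp lam gam (b k) := by
    intro k
    by_cases hkS : k ∈ S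
    · simpa [hg_zero k hkS] using mcp_sub_sq_le_of_le_abs hlam hgam (hs_large k hkS) (b k)
    · simpa [hs_zero k hkS, mcp] using mul_sub_sq_le_mcp hlam hgam (hg_le k hkS) (b k)
  calc ∑ k, mcp lam gam (s k) + g ⬝ᵥ (b - s) - (b - s) ⬝ᵥ (b - s) / (2 * gam)
      = ∑ k, (mcp lam gam (s k) + g k * (b k - s k) - (b k - s k) ^ 2 / (2 * gam)) := by
        simp only [dotProduct, Pi.sub_apply, Finset.sum_sub_distrib, Finset.sum_add_distrib,
          Finset.sum_div, sq]
    _ ≤ ∑ k, mcp lam gam (b k) := Finset.sum_le_sum fun k _ => hk k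

end MCP

section Criterion

variable {ι κ : Type*} [Fintype ι] [Fintype κ]

noncomputable def mcpCriterion (P : Matrix ι ι ℝ) (A : Matrix ι κ ℝ) (y : ι → ℝ) (n : ℕ)
    (lam gam : ℝ) (b : κ → ℝ) : ℝ :=
  (2 * n : ℝ)⁻¹ * ((P *ᵥ (y - A *ᵥ b)) ⬝ᵥ (P *ᵥ (y - A *ᵥ b))) + ∑ k, mcp lam gam (b k)

theorem mcpCriterion_lt_of_ne {P : Matrix ι ι ℝ} (hP : Pᵀ * P = P) {A : Matrix ι κ ℝ}
    {y : ι → ℝ} {n : ℕ} {lam gam c : ℝ} (hlam : 0 < lam) (hgam : 0 < gam)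
    (hc : ∀ u : κ → ℝ, c * (u ⬝ᵥ u) ≤ u ⬝ᵥ ((n : ℝ)⁻¹ • (Aᵀ * P * A)) *ᵥ u)
    (hgamc : 1 < gam * c) (S : Set κ) {s : κ → ℝ}
    (hs_large : ∀ k ∈ S, gam * lam ≤ |s k|) (hs_zero : ∀ k ∉ S, s k = 0)
    (hscore_zero : ∀ k ∈ S, (Aᵀ *ᵥ (P *ᵥ (y - A *ᵥ s))) k = 0)
    (hscore_le : ∀ k ∉ S, |(Aᵀ *ᵥ (P *ᵥ (y - A *ᵥ s))) k| / n ≤ lam)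
    {b : κ → ℝ} (hb : b ≠ s) :
    mcpCriterion P A y n lam gam s < mcpCriterion P A y n lam gam b := by
  have hpen := sum_mcp_add_dotProduct_sub_le hlam hgam S
    (g := (n : ℝ)⁻¹ • (Aᵀ *ᵥ (P *ᵥ (y - A *ᵥ s)))) hs_large hs_zero
    (fun k hk => by rw [Pi.smul_apply, hscore_zero k hk, smul_zero])
    (fun k hk => by
      rw [Pi.smul_apply, smul_eq_mul, abs_mul, abs_inv, Nat.abs_cast, ← div_eq_inv_mul]
      exact hscore_le k hk) b
  rw [smul_dotProduct, smul_eq_mul, dotProduct_comm] at hpen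
  have hcurv := hc (b - s)
  rw [smul_mulVec, dotProduct_smul, smul_eq_mul] at hcurv
  have hpos : 0 < (b - s) ⬝ᵥ (b - s) := lt_of_le_of_ne
    (Finset.sum_nonneg fun k _ => mul_self_nonneg _)
    (Ne.symm (mt dotProduct_self_eq_zero.mp (sub_ne_zero.mpr hb)))
  have hcurv_gt : (b - s) ⬝ᵥ (b - s) / (2 * gam) < c * ((b - s) ⬝ᵥ (b - s)) / 2 := by
    rw [div_lt_div_iff₀ (by positivity) two_pos]
    nlinarith
  have hresid : y - A *ᵥ b = (y - A *ᵥ s) - A *ᵥ (b - s) := by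
    rw [mulVec_sub]
    abel
  rw [mcpCriterion, mcpCriterion, hresid, dotProduct_mulVec_sub_mulVec_self hP _ A (b - s),
    mul_inv]
  linarith

end Criterion

theorem stmt_16_general {n p : ℕ} (X : Matrix (Fin n) (Fin p) ℝ) (y : Fin n → ℝ)
    (lam gam : ℝ) (hlam : 0 < lam)
    (j : Fin p)
    (Sj : Finset (Fin p))
    -- `Q_j = I − x_j(x_j'x_j)⁻¹x_j'`
    (Q : Matrix (Fin n) (Fin n) ℝ)
    (hQ : Q = 1 - ((fun i => X i j) ⬝ᵥ (fun i => X i j))⁻¹ •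
        vecMulVec (fun i => X i j) (fun i => X i j))
    -- `X_{-j}`
    (Xmj : Matrix (Fin n) {k : Fin p // k ≠ j} ℝ)
    (hXmj : Xmj = X.submatrix id (Subtype.val : {k : Fin p // k ≠ j} → Fin p))
    -- `c_j` is the smallest eigenvalue of `X_{-j}'Q_jX_{-j}/n`, with `γ > 1/c_j`
    (cj : ℝ) (hcjpos : 0 < cj)
    (hcj_le : ∀ u : {k : Fin p // k ≠ j} → ℝ,
      cj * (u ⬝ᵥ u) ≤ u ⬝ᵥ ((n : ℝ)⁻¹ • (Xmjᵀ * Q * Xmj)).mulVec u)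
    (hconv : gam > 1 / cj)
    -- the profiled criterion `G`
    (G : ({k : Fin p // k ≠ j} → ℝ) → ℝ)
    (hG : ∀ b, G b = (1 / (2 * n)) *
        ∑ i, (Q.mulVec (fun i' => y i' - ∑ k : {k : Fin p // k ≠ j}, X i' k.val * b k) i) ^ 2 +
        ∑ k : {k : Fin p // k ≠ j}, mcp lam gam (b k))
    -- `b*` is supported on `S_j` and satisfies (i), (ii), (iii)
    (bstar : {k : Fin p // k ≠ j} → ℝ)
    (hsupp : ∀ k : {k : Fin p // k ≠ j}, k.val ∉ Sj → bstar k = 0)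
    (hi : ∀ k : {k : Fin p // k ≠ j}, k.val ∈ Sj →
      (fun i => X i k.val) ⬝ᵥ
        Q.mulVec (fun i' => y i' - ∑ l : {k : Fin p // k ≠ j}, X i' l.val * bstar l) = 0)
    (hii : ∀ k : {k : Fin p // k ≠ j}, k.val ∈ Sj → gam * lam ≤ |bstar k|)
    (hiii : ∀ k : {k : Fin p // k ≠ j}, k.val ∉ Sj →
      |(fun i => X i k.val) ⬝ᵥ
        Q.mulVec (fun i' => y i' - ∑ l : {k : Fin p // k ≠ j}, X i' l.val * bstar l)| / n < lam) :
    ∀ b : {k : Fin p // k ≠ j} → ℝ, b ≠ bstar → G bstar < G b := by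
  intro b hb
  have hresid : ∀ b : {k : Fin p // k ≠ j} → ℝ,
      (fun i' => y i' - ∑ k : {k : Fin p // k ≠ j}, X i' k.val * b k) = y - Xmj *ᵥ b := by
    subst hXmj
    exact fun _ => rfl
  have hG_eq : G = mcpCriterion Q Xmj y n lam gam := funext fun b => by
    rw [hG, hresid, mcpCriterion, one_div]
    simp only [dotProduct, sq]
  have hscore : ∀ k : {k : Fin p // k ≠ j}, (Xmjᵀ *ᵥ (Q *ᵥ (y - Xmj *ᵥ bstar))) k =
      (fun i => X i k.val) ⬝ᵥ
        Q.mulVec (fun i' => y i' - ∑ l : {k : Fin p // k ≠ j}, X i' l.val * bstar l) := by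
    rw [hresid]
    subst hXmj
    exact fun _ => rfl
  have hgamc : 1 < gam * cj := by rwa [gt_iff_lt, div_lt_iff₀ hcjpos] at hconv
  rw [hG_eq]
  exact mcpCriterion_lt_of_ne (hQ ▸ projOrthCompl_transpose_mul_self _) hlam
    ((one_div_pos.mpr hcjpos).trans hconv) hcj_le hgamc {k | k.val ∈ Sj}
    (fun k hk => hii k hk) (fun k hk => hsupp k hk) (fun k hk => (hscore k).trans (hi k hk))
    (fun k hk => (hscore k ▸ hiii k hk).le) hb

/-- STATEMENT 16: sufficient conditions for a vector `b*` supported on `S_j` to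
be the unique global minimizer of the profiled semi-penalized criterion `G`,
assuming `γ > 1/c_j` with `c_j > 0` the smallest eigenvalue of
`X_{-j}'Q_jX_{-j}/n`: (i) the normal equations on `S_j`, (ii) `|b*_k| ≥ γλ` on
`S_j`, and (iii) `max_{k∉S_j}|x_k'Q_j(y − X_{-j}b*)|/n < λ`. -/
theorem stmt_16 {n p : ℕ} (X : Matrix (Fin n) (Fin p) ℝ) (y : Fin n → ℝ)
    (beta : Fin p → ℝ)
    (lam gam : ℝ) (hlam : 0 < lam) (hgam : 0 < gam)
    (j : Fin p)
    -- `S_j = {k : β_k ≠ 0, k ≠ j}`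
    (Sj : Finset (Fin p)) (hSj : ∀ k, k ∈ Sj ↔ beta k ≠ 0 ∧ k ≠ j)
    -- `Q_j = I − x_j(x_j'x_j)⁻¹x_j'`
    (Q : Matrix (Fin n) (Fin n) ℝ)
    (hQ : Q = 1 - ((fun i => X i j) ⬝ᵥ (fun i => X i j))⁻¹ •
        vecMulVec (fun i => X i j) (fun i => X i j))
    -- `X_{-j}`
    (Xmj : Matrix (Fin n) {k : Fin p // k ≠ j} ℝ)
    (hXmj : Xmj = X.submatrix id (Subtype.val : {k : Fin p // k ≠ j} → Fin p))
    -- `c_j` is the smallest eigenvalue of `X_{-j}'Q_jX_{-j}/n`, with `γ > 1/c_j`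
    (cj : ℝ) (hcjpos : 0 < cj)
    (hcj_le : ∀ u : {k : Fin p // k ≠ j} → ℝ,
      cj * (u ⬝ᵥ u) ≤ u ⬝ᵥ ((n : ℝ)⁻¹ • (Xmjᵀ * Q * Xmj)).mulVec u)
    (hcj_attained : ∃ u : {k : Fin p // k ≠ j} → ℝ, u ≠ 0 ∧
      u ⬝ᵥ ((n : ℝ)⁻¹ • (Xmjᵀ * Q * Xmj)).mulVec u = cj * (u ⬝ᵥ u))
    (hconv : gam > 1 / cj)
    -- the profiled criterion `G`
    (G : ({k : Fin p // k ≠ j} → ℝ) → ℝ)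
    (hG : ∀ b, G b = (1 / (2 * n)) *
        ∑ i, (Q.mulVec (fun i' => y i' - ∑ k : {k : Fin p // k ≠ j}, X i' k.val * b k) i) ^ 2 +
        ∑ k : {k : Fin p // k ≠ j}, mcp lam gam (b k))
    -- `b*` is supported on `S_j` and satisfies (i), (ii), (iii)
    (bstar : {k : Fin p // k ≠ j} → ℝ)
    (hsupp : ∀ k : {k : Fin p // k ≠ j}, k.val ∉ Sj → bstar k = 0)
    (hi : ∀ k : {k : Fin p // k ≠ j}, k.val ∈ Sj →
      (fun i => X i k.val) ⬝ᵥ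
        Q.mulVec (fun i' => y i' - ∑ l : {k : Fin p // k ≠ j}, X i' l.val * bstar l) = 0)
    (hii : ∀ k : {k : Fin p // k ≠ j}, k.val ∈ Sj → gam * lam ≤ |bstar k|)
    (hiii : ∀ k : {k : Fin p // k ≠ j}, k.val ∉ Sj →
      |(fun i => X i k.val) ⬝ᵥ
        Q.mulVec (fun i' => y i' - ∑ l : {k : Fin p // k ≠ j}, X i' l.val * bstar l)| / n < lam) :
    ∀ b : {k : Fin p // k ≠ j} → ℝ, b ≠ bstar → G bstar < G b :=
  stmt_16_general X y lam gam hlam j Sj Q hQ Xmj hXmj cj hcjpos hcj_le hconv G hG bstar hsupp hi hii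
    hiii
end
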